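/- (Gauss curve) Let λ₀, λ₁, λ∞ > 0 satisfy λ₀ + ελ₁ + ηλ∞ > 0 for all ε, η ∈ {+1,−1}, and set Λ = Π_{ε,η∈{±1}} (λ₀+ελ₁+ηλ∞). Define F_0 = Σ_{ε,η∈{±1}} ((λ₀+ελ₁+ηλ∞)²/2)·log(λ₀+ελ₁+ηλ∞) − 2λ₀²log(2λ₀) − 2λ₁²log(2λ₁) − 2λ∞²log(2λ∞), F_1 = −(1/12)·log( Λ/(λ₀λ₁λ∞) ), and F_g = (B_{2g}/(2g(2g−2)))·( Σ_{ε,η∈{±1}} (λ₀+ελ₁+ηλ∞)^{2−2g} − (2λ₀)^{2−2g} − (2λ₁)^{2−2g} − (2λ∞)^{2−2g} ) for g ≥ 2. Then for each j ∈ {0,1,∞} and every integer n ≥ 1, Σ_{k=1}^{n} (2/(2k)!) · ∂_{λ_j}^{2k} F_{n−k} = log Λ − 4·log(2λ_j) if n = 1, and = (1/(n−1))·(2λ_j)^{2−2n} if n ≥ 2. (That is, the free energy F = Σ_{g≥0} ℏ^{2g−2} F_g of the Gauss spectral curve satisfies the three-term difference equation X_j F = log Λ − 2log(2λ_j) − log(2λ_j+ℏ)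 − log(2λ_j−ℏ) for each j ∈ {0,1,∞}, order by order in ℏ.) -/

import Mathlib

/-!
Up to a constant,
`F_g(a, b, c) = Σ_{ε,η = ±1} φ_g(a + εb + ηc) - φ_g(2a) - φ_g(2b) - φ_g(2c)`
with `φ_0 = u² log u / 2`, `φ_1 = -log u / 12` and `φ_g = B_{2g} u^{2-2g} / (2g(2g-2))`.
Each `φ_g` is even, so this is symmetric in `a, b, c` and it suffices to differentiate in `a`,
where the four linear forms have slope `1` and `2a` has slope `2`.

For `k ≥ 1` and `g + k = n ≥ 2`, `φ_g^{(2k)} = -(2g-1) B_{2g} / (2g)! · (1/u)^{(2n-3)}`, so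
the coefficient of `ℏ^{2n-2}` is `(1/u)^{(2n-3)}` at the four forms and at `2a`, weighted by
`Σ_k s^{2k} (2g-1) B_{2g} / ((2k)! (2g)!)` with `s = 1` and `s = 2` respectively. Since
`Σ_j C(m,j) (j-1) B_j t^{m-j} = ((m-1) - t d/dt) B_m(t)`, evaluating Bernoulli polynomials at
`t = 1, 2` shows that these weights are `0` and `-1/(2n-2)!`: only the `2a` term survives.
For `n = 1` only `φ_0'' = log u + 3/2` enters.
-/

open Finset Filter Topology

section IteratedDeriv

variable {𝕜 E : Type*} [NontriviallyNormedField 𝕜] [NormedAddCommGroup E] [NormedSpace 𝕜 E]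

theorem iteratedDeriv_comp_mul_left (n : ℕ) (f : 𝕜 → E) (c x : 𝕜) :
    iteratedDeriv n (fun y => f (c * y)) x = c ^ n • iteratedDeriv n f (c * x) := by
  induction n generalizing f with
  | zero => simp
  | succ n ih =>
    have hderiv : deriv (fun y => f (c * y)) = fun y => c • deriv f (c * y) :=
      funext (deriv_comp_mul_left c f)
    rw [iteratedDeriv_succ', iteratedDeriv_succ', hderiv, iteratedDeriv_fun_const_smul_field,
      ih, smul_smul, pow_succ']

theorem iteratedDeriv_succ_of_eventually_hasDerivAt {f f' : 𝕜 → E} {x : 𝕜}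
    (h : ∀ᶠ y in 𝓝 x, HasDerivAt f (f' y) y) (m : ℕ) :
    iteratedDeriv (m + 1) f x = iteratedDeriv m f' x := by
  rw [iteratedDeriv_succ']
  exact Filter.EventuallyEq.iteratedDeriv_eq m (h.mono fun y hy => hy.deriv)

theorem iteratedDeriv_eq_of_eventually_eq_add_const {f g : 𝕜 → E} {x : 𝕜} {K : E} {m : ℕ}
    (hm : m ≠ 0) (h : ∀ᶠ y in 𝓝 x, f y = g y + K) :
    iteratedDeriv m f x = iteratedDeriv m g x := by
  rw [Filter.EventuallyEq.iteratedDeriv_eq m h]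
  simpa only [add_comm] using iteratedDeriv_const_add (Nat.pos_of_ne_zero hm) K (f := g) (x := x)

theorem iteratedDeriv_inv_eq (m : ℕ) (x : 𝕜) :
    iteratedDeriv m Inv.inv x = (-1) ^ m * m.factorial * x ^ (-1 - m : ℤ) := by
  rw [iteratedDeriv_eq_iterate, iter_deriv_inv]

theorem iteratedDeriv_iteratedDeriv (m n : ℕ) (f : 𝕜 → E) :
    iteratedDeriv m (iteratedDeriv n f) = iteratedDeriv (m + n) f := by
  rw [iteratedDeriv_eq_iterate, iteratedDeriv_eq_iterate, iteratedDeriv_eq_iterate,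
    Function.iterate_add_apply]

end IteratedDeriv

theorem Real.iteratedDeriv_succ_log (m : ℕ) :
    iteratedDeriv (m + 1) Real.log = iteratedDeriv m Inv.inv := by
  rw [iteratedDeriv_succ', Real.deriv_log']

theorem sum_range_choose_mul_bernoulli (m : ℕ) (t : ℚ) :
    ∑ j ∈ range (m + 1), (m.choose j : ℚ) * (j - 1) * bernoulli j * t ^ (m - j) =
      (m - 1) * (Polynomial.bernoulli m).eval t -
        t * (Polynomial.derivative (Polynomial.bernoulli m)).eval t := by
  simp only [Polynomial.bernoulli, Polynomial.derivative_sum, Polynomial.eval_finsetSum,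
    Polynomial.derivative_monomial, Polynomial.eval_monomial, Finset.mul_sum,
    ← Finset.sum_sub_distrib]
  refine sum_congr rfl fun j hj => ?_
  obtain ⟨d, rfl⟩ := Nat.exists_eq_add_of_le (Nat.lt_succ_iff.mp (mem_range.mp hj))
  rw [Nat.add_sub_cancel_left]
  rcases d with _ | d
  · simp
  · rw [Nat.add_sub_cancel]
    push_cast
    ring

theorem sum_range_two_mul_of_odd_eq_zero {M : Type*} [AddCommMonoid M] (f : ℕ → M)
    (hf : ∀ i, f (2 * i + 1) = 0) (n : ℕ) :
    ∑ j ∈ range (2 * n), f j = ∑ i ∈ range n, f (2 * i) := by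
  induction n with
  | zero => simp
  | succ n ih =>
    rw [show 2 * (n + 1) = 2 * n + 1 + 1 by ring, sum_range_succ, sum_range_succ, ih, hf,
      add_zero, sum_range_succ]

theorem sum_Icc_one_eq_sum_range_sub {M : Type*} [AddCommMonoid M] (f : ℕ → M) (n : ℕ) :
    ∑ k ∈ Icc 1 n, f k = ∑ g ∈ range n, f (n - g) := by
  refine sum_nbij' (fun k => n - k) (fun g => n - g) ?_ ?_ ?_ ?_ ?_ <;>
    intro k hk <;> simp only [mem_Icc, mem_range] at hk ⊢ <;>
    first | omega | rw [Nat.sub_sub_self hk.2]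

theorem sum_choose_mul_bernoulli_even (n : ℕ) (t : ℚ) :
    ∑ k ∈ Icc 1 n, ((2 * n).choose (2 * k) : ℚ) * (2 * ((n - k : ℕ) : ℚ) - 1) *
        bernoulli (2 * (n - k)) * t ^ (2 * k) =
      (2 * n - 1) * ((Polynomial.bernoulli (2 * n)).eval t - bernoulli (2 * n)) -
        t * (Polynomial.derivative (Polynomial.bernoulli (2 * n))).eval t := by
  have hodd : ∀ i, ((2 * n).choose (2 * i + 1) : ℚ) * ((2 * i + 1 : ℕ) - 1) *
      bernoulli (2 * i + 1) * t ^ (2 * n - (2 * i + 1)) = 0 := by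
    intro i
    rcases i with _ | i
    · simp
    · rw [bernoulli_eq_bernoulli'_of_ne_one (by omega),
        bernoulli'_eq_zero_of_odd (odd_two_mul_add_one _) (by omega)]
      simp
  have hsum := sum_range_choose_mul_bernoulli (2 * n) t
  rw [sum_range_succ, sum_range_two_mul_of_odd_eq_zero _ hodd] at hsum
  rw [sum_Icc_one_eq_sum_range_sub]
  calc _ = ∑ g ∈ range n, ((2 * n).choose (2 * g) : ℚ) * ((2 * g : ℕ) - 1) *
        bernoulli (2 * g) * t ^ (2 * n - 2 * g) := by
        refine sum_congr rfl fun g hg => ?_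
        have hg : g < n := mem_range.mp hg
        rw [show n - (n - g) = g by omega, show 2 * (n - g) = 2 * n - 2 * g by omega,
          Nat.choose_symm (by omega)]
        push_cast
        ring
    _ = _ := by
        rw [eq_sub_of_add_eq hsum]
        simp only [Nat.cast_mul, Nat.cast_ofNat, Nat.choose_self, Nat.cast_one, one_mul,
          tsub_self, pow_zero, mul_one]
        ring

theorem sum_bernoulli_div_factorial (n : ℕ) (t : ℚ) :
    ∑ k ∈ Icc 1 n, t ^ (2 * k) * ((2 * ((n - k : ℕ) : ℚ) - 1) * bernoulli (2 * (n - k))) /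
        ((2 * k).factorial * (2 * (n - k)).factorial) =
      ((2 * n - 1) * ((Polynomial.bernoulli (2 * n)).eval t - bernoulli (2 * n)) -
        t * (Polynomial.derivative (Polynomial.bernoulli (2 * n))).eval t) / (2 * n).factorial := by
  rw [eq_div_iff (by positivity), sum_mul, ← sum_choose_mul_bernoulli_even]
  refine sum_congr rfl fun k hk => ?_
  have hkn : 2 * k ≤ 2 * n := by have := (mem_Icc.mp hk).2; omega
  have hfac := Nat.choose_mul_factorial_mul_factorial hkn
  rw [show 2 * n - 2 * k = 2 * (n - k) by omega] at hfac
  rw [← hfac]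
  push_cast
  field_simp

theorem sum_bernoulli_div_factorial_eq_zero {n : ℕ} (hn : 2 ≤ n) :
    ∑ k ∈ Icc 1 n, (2 * ((n - k : ℕ) : ℚ) - 1) * bernoulli (2 * (n - k)) /
        ((2 * k).factorial * (2 * (n - k)).factorial) = 0 := by
  have h := sum_bernoulli_div_factorial n 1
  simp only [one_pow, one_mul] at h
  rw [h, Polynomial.derivative_bernoulli, Polynomial.eval_mul, Polynomial.eval_natCast,
    Polynomial.bernoulli_eval_one, Polynomial.bernoulli_eval_one,
    bernoulli'_eq_zero_of_odd (show Odd (2 * n - 1) from ⟨n - 1, by omega⟩) (by omega),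
    bernoulli_eq_bernoulli'_of_ne_one (by omega)]
  simp

theorem sum_four_pow_mul_bernoulli_div_factorial {n : ℕ} (hn : 2 ≤ n) :
    ∑ k ∈ Icc 1 n, 4 ^ k * ((2 * ((n - k : ℕ) : ℚ) - 1) * bernoulli (2 * (n - k))) /
        ((2 * k).factorial * (2 * (n - k)).factorial) = -1 / (2 * n - 2).factorial := by
  have h := sum_bernoulli_div_factorial n 2
  simp only [pow_mul, show (2 : ℚ) ^ 2 = 4 by norm_num] at h
  rw [h, Polynomial.derivative_bernoulli, Polynomial.eval_mul, Polynomial.eval_natCast,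
    show (2 : ℚ) = 1 + 1 by norm_num, Polynomial.bernoulli_eval_one_add,
    Polynomial.bernoulli_eval_one_add, Polynomial.bernoulli_eval_one,
    Polynomial.bernoulli_eval_one,
    bernoulli'_eq_zero_of_odd (show Odd (2 * n - 1) from ⟨n - 1, by omega⟩) (by omega),
    bernoulli_eq_bernoulli'_of_ne_one (by omega)]
  obtain ⟨m, rfl⟩ : ∃ m, n = m + 2 := ⟨n - 2, by omega⟩
  rw [show 2 * (m + 2) = 2 * m + 2 + 1 + 1 by ring,
    show 2 * m + 2 + 1 + 1 - 2 = 2 * m + 2 by omega]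
  simp only [Nat.factorial_succ]
  push_cast
  field_simp
  ring

noncomputable def freeEnergyKernel : ℕ → ℝ → ℝ
  | 0, u => u ^ 2 / 2 * Real.log u
  | 1, u => -(1 / 12) * Real.log u
  | g + 2, u =>
    (bernoulli (2 * (g + 2)) : ℝ) / (2 * ((g + 2 : ℕ) : ℝ) * (2 * ((g + 2 : ℕ) : ℝ) - 2)) *
      u ^ (2 - 2 * ((g + 2 : ℕ) : ℤ))

-- `Real.log x = Real.log |x|`, so every kernel is even.
theorem freeEnergyKernel_neg (g : ℕ) (u : ℝ) :
    freeEnergyKernel g (-u) = freeEnergyKernel g u := by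
  rcases g with _ | _ | g
  · simp only [freeEnergyKernel, Real.log_neg_eq_log, neg_sq]
  · simp only [freeEnergyKernel, Real.log_neg_eq_log]
  · simp only [freeEnergyKernel]
    rw [Even.neg_zpow ⟨-(g : ℤ) - 1, by push_cast; ring⟩]

theorem contDiffAt_freeEnergyKernel (g : ℕ) {u : ℝ} (hu : u ≠ 0) {n : WithTop ℕ∞} :
    ContDiffAt ℝ n (freeEnergyKernel g) u := by
  have hlog : ContDiffAt ℝ n Real.log u := Real.contDiffAt_log.mpr hu
  rcases g with _ | _ | g
  · exact ((contDiffAt_id.pow 2).div_const 2).mul hlog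
  · exact contDiffAt_const.mul hlog
  · exact contDiffAt_const.mul (analyticAt_id.zpow hu).contDiffAt

theorem iteratedDeriv_freeEnergyKernel_zero (m : ℕ) {u : ℝ} (hu : u ≠ 0) :
    iteratedDeriv (m + 2) (freeEnergyKernel 0) u =
      iteratedDeriv m (fun v => Real.log v + 3 / 2) u := by
  have h₁ : ∀ v : ℝ, v ≠ 0 → HasDerivAt (freeEnergyKernel 0) (v * Real.log v + v / 2) v := by
    intro v hv
    refine (((hasDerivAt_pow 2 v).div_const 2).fun_mul
      (Real.hasDerivAt_log hv)).congr_deriv ?_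
    field_simp
    ring
  have h₂ : ∀ v : ℝ, v ≠ 0 →
      HasDerivAt (fun v => v * Real.log v + v / 2) (Real.log v + 3 / 2) v := by
    intro v hv
    refine (((hasDerivAt_id' v).fun_mul (Real.hasDerivAt_log hv)).fun_add
      ((hasDerivAt_id' v).div_const 2)).congr_deriv ?_
    field_simp
    ring
  rw [iteratedDeriv_succ_of_eventually_hasDerivAt ((eventually_ne_nhds hu).mono h₁),
    iteratedDeriv_succ_of_eventually_hasDerivAt ((eventually_ne_nhds hu).mono h₂)]

theorem iteratedDeriv_freeEnergyKernel {g k : ℕ} (hk : k ≠ 0) (hgk : 2 ≤ g + k) {u : ℝ}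
    (hu : u ≠ 0) :
    iteratedDeriv (2 * k) (freeEnergyKernel g) u =
      -((2 * g - 1) * bernoulli (2 * g) / (2 * g).factorial) *
        iteratedDeriv (2 * (g + k) - 3) Inv.inv u := by
  rcases g with _ | _ | g
  · obtain ⟨j, rfl⟩ : ∃ j, k = j + 2 := ⟨k - 2, by omega⟩
    rw [show 2 * (j + 2) = 2 * j + 2 + 2 by ring, iteratedDeriv_freeEnergyKernel_zero _ hu,
      iteratedDeriv_eq_of_eventually_eq_add_const (g := Real.log) (K := 3 / 2) (by omega)
        (Eventually.of_forall fun _ => rfl),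
      Real.iteratedDeriv_succ_log, show 2 * (0 + (j + 2)) - 3 = 2 * j + 1 by omega]
    simp
  · obtain ⟨j, rfl⟩ : ∃ j, k = j + 1 := ⟨k - 1, by omega⟩
    show iteratedDeriv _ (fun u => -(1 / 12) * Real.log u) u = _
    rw [iteratedDeriv_const_mul_field, show 2 * (j + 1) = 2 * j + 1 + 1 by ring,
      Real.iteratedDeriv_succ_log, show 2 * (0 + 1 + (j + 1)) - 3 = 2 * j + 1 by omega]
    norm_num [bernoulli_eq_bernoulli'_of_ne_one, bernoulli'_two]
  · have hpow : (fun v : ℝ => v ^ (2 - 2 * ((g + 2 : ℕ) : ℤ))) =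
        fun v => -(1 / (2 * g + 1).factorial : ℝ) * iteratedDeriv (2 * g + 1) Inv.inv v := by
      funext v
      rw [iteratedDeriv_inv_eq, (odd_two_mul_add_one g).neg_one_pow]
      field_simp
      congr 1
      push_cast
      ring
    show iteratedDeriv _ (fun v => _ * v ^ (2 - 2 * ((g + 2 : ℕ) : ℤ))) u = _
    rw [iteratedDeriv_const_mul_field, hpow, iteratedDeriv_const_mul_field,
      iteratedDeriv_iteratedDeriv, show 2 * k + (2 * g + 1) = 2 * (g + 2 + k) - 3 by omega,
      ← mul_assoc]
    congr 1
    rw [show 2 * (g + 2) = 2 * g + 1 + 1 + 1 + 1 by ring]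
    simp only [Nat.factorial_succ]
    push_cast
    have hfac : (2 * g + 1).factorial ≠ 0 := Nat.factorial_ne_zero _
    rw [show 2 * ((g : ℝ) + 2) - 2 = 2 * (g + 1) by ring]
    field_simp
    ring

noncomputable def gaussFreeEnergy (g : ℕ) (a b c : ℝ) : ℝ :=
  freeEnergyKernel g (a + b + c) + freeEnergyKernel g (a + b - c) +
    freeEnergyKernel g (a - b + c) + freeEnergyKernel g (a - b - c) -
    freeEnergyKernel g (2 * a) - freeEnergyKernel g (2 * b) - freeEnergyKernel g (2 * c)

theorem gaussFreeEnergy_zero (a b c : ℝ) :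
    gaussFreeEnergy 0 a b c =
      (a + b + c) ^ 2 / 2 * Real.log (a + b + c) + (a + b - c) ^ 2 / 2 * Real.log (a + b - c)
        + (a - b + c) ^ 2 / 2 * Real.log (a - b + c)
        + (a - b - c) ^ 2 / 2 * Real.log (a - b - c)
        - 2 * a ^ 2 * Real.log (2 * a) - 2 * b ^ 2 * Real.log (2 * b)
        - 2 * c ^ 2 * Real.log (2 * c) := by
  simp only [gaussFreeEnergy, freeEnergyKernel]
  ring

theorem gaussFreeEnergy_one {a b c : ℝ} (ha : a ≠ 0) (hb : b ≠ 0) (hc : c ≠ 0)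
    (h₁ : a + b + c ≠ 0) (h₂ : a + b - c ≠ 0) (h₃ : a - b + c ≠ 0) (h₄ : a - b - c ≠ 0) :
    gaussFreeEnergy 1 a b c =
      -(1 / 12) * Real.log ((a + b + c) * (a + b - c) * (a - b + c) * (a - b - c) / (a * b * c))
        + Real.log 2 / 4 := by
  simp only [gaussFreeEnergy, freeEnergyKernel]
  rw [Real.log_div (mul_ne_zero (mul_ne_zero (mul_ne_zero h₁ h₂) h₃) h₄)
      (mul_ne_zero (mul_ne_zero ha hb) hc),
    Real.log_mul (mul_ne_zero (mul_ne_zero h₁ h₂) h₃) h₄, Real.log_mul (mul_ne_zero h₁ h₂) h₃,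
    Real.log_mul h₁ h₂, Real.log_mul (mul_ne_zero ha hb) hc, Real.log_mul ha hb,
    Real.log_mul two_ne_zero ha, Real.log_mul two_ne_zero hb, Real.log_mul two_ne_zero hc]
  ring

theorem gaussFreeEnergy_of_two_le {g : ℕ} (hg : 2 ≤ g) (a b c : ℝ) :
    gaussFreeEnergy g a b c = (bernoulli (2 * g) : ℝ) / (2 * (g : ℝ) * (2 * (g : ℝ) - 2))
        * ((a + b + c) ^ (2 - 2 * (g : ℤ)) + (a + b - c) ^ (2 - 2 * (g : ℤ))
           + (a - b + c) ^ (2 - 2 * (g : ℤ)) + (a - b - c) ^ (2 - 2 * (g : ℤ))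
           - (2 * a) ^ (2 - 2 * (g : ℤ)) - (2 * b) ^ (2 - 2 * (g : ℤ))
           - (2 * c) ^ (2 - 2 * (g : ℤ))) := by
  obtain ⟨g, rfl⟩ : ∃ g', g = g' + 2 := ⟨g - 2, by omega⟩
  simp only [gaussFreeEnergy, freeEnergyKernel]
  ring

theorem gaussFreeEnergy_comm₁₂ (g : ℕ) (a b c : ℝ) :
    gaussFreeEnergy g a b c = gaussFreeEnergy g b a c := by
  rw [gaussFreeEnergy, gaussFreeEnergy, show b - a + c = -(a - b - c) by ring,
    show b - a - c = -(a - b + c) by ring, freeEnergyKernel_neg, freeEnergyKernel_neg,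
    add_comm b a]
  ring

theorem gaussFreeEnergy_comm₁₃ (g : ℕ) (a b c : ℝ) :
    gaussFreeEnergy g a b c = gaussFreeEnergy g c b a := by
  rw [gaussFreeEnergy, gaussFreeEnergy, show c + b - a = -(a - b - c) by ring,
    show c - b - a = -(a + b - c) by ring, freeEnergyKernel_neg, freeEnergyKernel_neg,
    show c + b + a = a + b + c by ring, show c - b + a = a - b + c by ring]
  ring

theorem iteratedDeriv_gaussFreeEnergy (g : ℕ) {k : ℕ} (hk : k ≠ 0) {a b c : ℝ} (ha : a ≠ 0)
    (h₁ : a + b + c ≠ 0) (h₂ : a + b - c ≠ 0) (h₃ : a - b + c ≠ 0) (h₄ : a - b - c ≠ 0) :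
    iteratedDeriv k (fun y => gaussFreeEnergy g y b c) a =
      iteratedDeriv k (freeEnergyKernel g) (a + b + c) +
        iteratedDeriv k (freeEnergyKernel g) (a + b - c) +
        iteratedDeriv k (freeEnergyKernel g) (a - b + c) +
        iteratedDeriv k (freeEnergyKernel g) (a - b - c) -
        2 ^ k * iteratedDeriv k (freeEnergyKernel g) (2 * a) := by
  have hφ : ∀ u, u ≠ 0 → ContDiffAt ℝ k (freeEnergyKernel g) u :=
    fun u hu => contDiffAt_freeEnergyKernel g hu
  have p₁ := hφ (a + (b + c)) (by rwa [← add_assoc])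
  have p₂ := hφ (a + (b - c)) (by rwa [← add_sub_assoc])
  have p₃ := hφ (a - (b - c)) (by rwa [← sub_add])
  have p₄ := hφ (a - (b + c)) (by rwa [← sub_sub])
  have p₅ := hφ _ (mul_ne_zero two_ne_zero ha)
  have hslice : (fun y => gaussFreeEnergy g y b c) = fun y =>
      freeEnergyKernel g (y + (b + c)) + freeEnergyKernel g (y + (b - c)) +
        freeEnergyKernel g (y - (b - c)) + freeEnergyKernel g (y - (b + c)) -
        freeEnergyKernel g (2 * y) - freeEnergyKernel g (2 * b) - freeEnergyKernel g (2 * c) := by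
    funext y
    rw [gaussFreeEnergy, add_assoc y, add_sub_assoc y, sub_add y, sub_sub y]
  rw [hslice, iteratedDeriv_fun_sub (by fun_prop) contDiffAt_const,
    iteratedDeriv_fun_sub (by fun_prop) contDiffAt_const,
    iteratedDeriv_fun_sub (by fun_prop) (by fun_prop),
    iteratedDeriv_fun_add (by fun_prop) (by fun_prop),
    iteratedDeriv_fun_add (by fun_prop) (by fun_prop),
    iteratedDeriv_fun_add (by fun_prop) (by fun_prop), add_assoc a, add_sub_assoc a, sub_add a,
    sub_sub a]
  simp only [iteratedDeriv_const, if_neg hk, iteratedDeriv_comp_add_const,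
    iteratedDeriv_comp_sub_const, iteratedDeriv_comp_mul_left, smul_eq_mul, sub_zero]

-- The coefficient of `ℏ^(2n-2)` in `F(x + ℏ) - 2 F(x) + F(x - ℏ)` for `F = Σ_g ℏ^(2g-2) F_g`.
noncomputable def secondDifferenceCoeff (F : ℕ → ℝ → ℝ) (n : ℕ) (x : ℝ) : ℝ :=
  ∑ k ∈ Icc 1 n, 2 / ((2 * k).factorial : ℝ) * iteratedDeriv (2 * k) (F (n - k)) x

theorem secondDifferenceCoeff_congr {F G : ℕ → ℝ → ℝ} {x : ℝ}
    (h : ∀ g, ∃ K, ∀ᶠ y in 𝓝 x, F g y = G g y + K) (n : ℕ) :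
    secondDifferenceCoeff F n x = secondDifferenceCoeff G n x := by
  refine sum_congr rfl fun k hk => ?_
  obtain ⟨K, hK⟩ := h (n - k)
  rw [iteratedDeriv_eq_of_eventually_eq_add_const (by have := (mem_Icc.mp hk).1; omega) hK]

theorem iteratedDeriv_gaussFreeEnergy_eq_bernoulli_mul {n k : ℕ} (hk : k ∈ Icc 1 n) (hn : 2 ≤ n) {a b c : ℝ}
    (ha : a ≠ 0) (h₁ : a + b + c ≠ 0) (h₂ : a + b - c ≠ 0) (h₃ : a - b + c ≠ 0)
    (h₄ : a - b - c ≠ 0) :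
    iteratedDeriv (2 * k) (fun y => gaussFreeEnergy (n - k) y b c) a =
      -((2 * ((n - k : ℕ) : ℝ) - 1) * bernoulli (2 * (n - k)) / (2 * (n - k)).factorial) *
        (iteratedDeriv (2 * n - 3) Inv.inv (a + b + c) +
          iteratedDeriv (2 * n - 3) Inv.inv (a + b - c) +
          iteratedDeriv (2 * n - 3) Inv.inv (a - b + c) +
          iteratedDeriv (2 * n - 3) Inv.inv (a - b - c) -
          4 ^ k * iteratedDeriv (2 * n - 3) Inv.inv (2 * a)) := by
  obtain ⟨hk1, hkn⟩ := mem_Icc.mp hk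
  have hD : ∀ u, u ≠ 0 → iteratedDeriv (2 * k) (freeEnergyKernel (n - k)) u =
      -((2 * ((n - k : ℕ) : ℝ) - 1) * bernoulli (2 * (n - k)) / (2 * (n - k)).factorial) *
        iteratedDeriv (2 * n - 3) Inv.inv u := fun u hu => by
    rw [iteratedDeriv_freeEnergyKernel (by omega) (by omega) hu, Nat.sub_add_cancel hkn]
  rw [iteratedDeriv_gaussFreeEnergy _ (by omega) ha h₁ h₂ h₃ h₄, hD _ h₁, hD _ h₂, hD _ h₃,
    hD _ h₄, hD _ (mul_ne_zero two_ne_zero ha), pow_mul]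
  norm_num
  ring

theorem secondDifferenceCoeff_one_gaussFreeEnergy {a b c : ℝ} (ha : a ≠ 0)
    (h₁ : a + b + c ≠ 0) (h₂ : a + b - c ≠ 0) (h₃ : a - b + c ≠ 0) (h₄ : a - b - c ≠ 0) :
    secondDifferenceCoeff (fun g y => gaussFreeEnergy g y b c) 1 a =
      Real.log ((a + b + c) * (a + b - c) * (a - b + c) * (a - b - c)) -
        4 * Real.log (2 * a) := by
  have hD : ∀ u, u ≠ 0 → iteratedDeriv 2 (freeEnergyKernel 0) u = Real.log u + 3 / 2 :=
    fun u hu => by simpa using iteratedDeriv_freeEnergyKernel_zero 0 hu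
  simp only [secondDifferenceCoeff, Icc_self, sum_singleton]
  rw [iteratedDeriv_gaussFreeEnergy 0 two_ne_zero ha h₁ h₂ h₃ h₄, hD _ h₁, hD _ h₂, hD _ h₃,
    hD _ h₄, hD _ (mul_ne_zero two_ne_zero ha),
    Real.log_mul (mul_ne_zero (mul_ne_zero h₁ h₂) h₃) h₄, Real.log_mul (mul_ne_zero h₁ h₂) h₃,
    Real.log_mul h₁ h₂]
  norm_num
  ring

theorem secondDifferenceCoeff_gaussFreeEnergy_of_two_le {n : ℕ} (hn : 2 ≤ n) {a b c : ℝ}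
    (ha : a ≠ 0) (h₁ : a + b + c ≠ 0) (h₂ : a + b - c ≠ 0) (h₃ : a - b + c ≠ 0)
    (h₄ : a - b - c ≠ 0) :
    secondDifferenceCoeff (fun g y => gaussFreeEnergy g y b c) n a =
      1 / ((n : ℝ) - 1) * (2 * a) ^ (2 - 2 * (n : ℤ)) := by
  set I := iteratedDeriv (2 * n - 3) (Inv.inv : ℝ → ℝ)
  set w : ℕ → ℝ := fun k => (2 * ((n - k : ℕ) : ℝ) - 1) * bernoulli (2 * (n - k)) /
    ((2 * k).factorial * (2 * (n - k)).factorial)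
  have hterm : ∀ k ∈ Icc 1 n,
      2 / ((2 * k).factorial : ℝ) *
          iteratedDeriv (2 * k) (fun y => gaussFreeEnergy (n - k) y b c) a =
        w k * (-2 * (I (a + b + c) + I (a + b - c) + I (a - b + c) + I (a - b - c))) +
          4 ^ k * w k * (2 * I (2 * a)) := fun k hk => by
    rw [iteratedDeriv_gaussFreeEnergy_eq_bernoulli_mul hk hn ha h₁ h₂ h₃ h₄]
    simp only [w]
    field_simp
    ring
  have hw : ∑ k ∈ Icc 1 n, w k = 0 := by
    simp only [w]
    exact_mod_cast sum_bernoulli_div_factorial_eq_zero hn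
  have hw4 : ∑ k ∈ Icc 1 n, 4 ^ k * w k = -1 / (2 * n - 2).factorial := by
    simp only [w, ← mul_div_assoc]
    exact_mod_cast sum_four_pow_mul_bernoulli_div_factorial hn
  rw [secondDifferenceCoeff, sum_congr rfl hterm, sum_add_distrib, ← sum_mul, ← sum_mul, hw,
    hw4, zero_mul, zero_add]
  obtain ⟨m, rfl⟩ : ∃ m, n = m + 2 := ⟨n - 2, by omega⟩
  simp only [I]
  rw [iteratedDeriv_inv_eq, show 2 * (m + 2) - 3 = 2 * m + 1 by omega,
    show 2 * (m + 2) - 2 = 2 * m + 1 + 1 by omega, (odd_two_mul_add_one m).neg_one_pow,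
    show (-1 - ((2 * m + 1 : ℕ) : ℤ)) = 2 - 2 * ((m + 2 : ℕ) : ℤ) by push_cast; ring,
    Nat.factorial_succ]
  have hm : (m : ℝ) + 1 ≠ 0 := by positivity
  push_cast
  rw [show (m : ℝ) + 2 - 1 = m + 1 by ring]
  field_simp
  ring

theorem secondDifferenceCoeff_gaussFreeEnergy₁ {n : ℕ} (hn : 1 ≤ n) {a b c : ℝ} (ha : a ≠ 0)
    (h₁ : a + b + c ≠ 0) (h₂ : a + b - c ≠ 0) (h₃ : a - b + c ≠ 0) (h₄ : a - b - c ≠ 0) :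
    secondDifferenceCoeff (fun g y => gaussFreeEnergy g y b c) n a =
      if n = 1 then
        Real.log ((a + b + c) * (a + b - c) * (a - b + c) * (a - b - c)) - 4 * Real.log (2 * a)
      else 1 / ((n : ℝ) - 1) * (2 * a) ^ (2 - 2 * (n : ℤ)) := by
  split_ifs with hn1
  · subst hn1
    exact secondDifferenceCoeff_one_gaussFreeEnergy ha h₁ h₂ h₃ h₄
  · exact secondDifferenceCoeff_gaussFreeEnergy_of_two_le (by omega) ha h₁ h₂ h₃ h₄

theorem secondDifferenceCoeff_gaussFreeEnergy₂ {n : ℕ} (hn : 1 ≤ n) {a b c : ℝ} (hb : b ≠ 0)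
    (h₁ : a + b + c ≠ 0) (h₂ : a + b - c ≠ 0) (h₃ : a - b + c ≠ 0) (h₄ : a - b - c ≠ 0) :
    secondDifferenceCoeff (fun g y => gaussFreeEnergy g a y c) n b =
      if n = 1 then
        Real.log ((a + b + c) * (a + b - c) * (a - b + c) * (a - b - c)) - 4 * Real.log (2 * b)
      else 1 / ((n : ℝ) - 1) * (2 * b) ^ (2 - 2 * (n : ℤ)) := by
  simp_rw [gaussFreeEnergy_comm₁₂ _ a]
  rw [secondDifferenceCoeff_gaussFreeEnergy₁ hn hb (fun h => h₁ (by linarith))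
    (fun h => h₂ (by linarith)) (fun h => h₄ (by linarith)) (fun h => h₃ (by linarith)),
    show (b + a + c) * (b + a - c) * (b - a + c) * (b - a - c) =
      (a + b + c) * (a + b - c) * (a - b + c) * (a - b - c) by ring]

theorem secondDifferenceCoeff_gaussFreeEnergy₃ {n : ℕ} (hn : 1 ≤ n) {a b c : ℝ} (hc : c ≠ 0)
    (h₁ : a + b + c ≠ 0) (h₂ : a + b - c ≠ 0) (h₃ : a - b + c ≠ 0) (h₄ : a - b - c ≠ 0) :
    secondDifferenceCoeff (fun g y => gaussFreeEnergy g a b y) n c =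
      if n = 1 then
        Real.log ((a + b + c) * (a + b - c) * (a - b + c) * (a - b - c)) - 4 * Real.log (2 * c)
      else 1 / ((n : ℝ) - 1) * (2 * c) ^ (2 - 2 * (n : ℤ)) := by
  simp_rw [gaussFreeEnergy_comm₁₃ _ a]
  rw [secondDifferenceCoeff_gaussFreeEnergy₁ hn hc (fun h => h₁ (by linarith))
    (fun h => h₄ (by linarith)) (fun h => h₃ (by linarith)) (fun h => h₂ (by linarith)),
    show (c + b + a) * (c + b - a) * (c - b + a) * (c - b - a) =
      (a + b + c) * (a + b - c) * (a - b + c) * (a - b - c) by ring]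

/-- (Gauss curve) The free energy `F = Σ_{g≥0} ℏ^{2g−2} F_g(λ₀,λ₁,λ∞)` of the
Gauss spectral curve satisfies the three-term difference equation
`X_j F = log Λ − 2log(2λ_j) − log(2λ_j+ℏ) − log(2λ_j−ℏ)` for each
`j ∈ {0,1,∞}`, order by order in `ℏ`, where
`Λ = Π_{ε,η∈{±1}}(λ₀+ελ₁+ηλ∞)`. -/
theorem stmt18 (F : ℕ → ℝ → ℝ → ℝ → ℝ)
    (hF0 : ∀ a b c : ℝ, 0 < a → 0 < b → 0 < c →
      0 < a + b + c → 0 < a + b - c → 0 < a - b + c → 0 < a - b - c →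
      F 0 a b c =
        (a + b + c) ^ 2 / 2 * Real.log (a + b + c)
        + (a + b - c) ^ 2 / 2 * Real.log (a + b - c)
        + (a - b + c) ^ 2 / 2 * Real.log (a - b + c)
        + (a - b - c) ^ 2 / 2 * Real.log (a - b - c)
        - 2 * a ^ 2 * Real.log (2 * a) - 2 * b ^ 2 * Real.log (2 * b)
        - 2 * c ^ 2 * Real.log (2 * c))
    (hF1 : ∀ a b c : ℝ, 0 < a → 0 < b → 0 < c →
      0 < a + b + c → 0 < a + b - c → 0 < a - b + c → 0 < a - b - c →
      F 1 a b c = -(1 / 12) * Real.log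
        ((a + b + c) * (a + b - c) * (a - b + c) * (a - b - c) / (a * b * c)))
    (hFg : ∀ g : ℕ, 2 ≤ g → ∀ a b c : ℝ, 0 < a → 0 < b → 0 < c →
      0 < a + b + c → 0 < a + b - c → 0 < a - b + c → 0 < a - b - c →
      F g a b c = (bernoulli (2 * g) : ℝ) / (2 * (g : ℝ) * (2 * (g : ℝ) - 2))
        * ((a + b + c) ^ (2 - 2 * (g : ℤ)) + (a + b - c) ^ (2 - 2 * (g : ℤ))
           + (a - b + c) ^ (2 - 2 * (g : ℤ)) + (a - b - c) ^ (2 - 2 * (g : ℤ))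
           - (2 * a) ^ (2 - 2 * (g : ℤ)) - (2 * b) ^ (2 - 2 * (g : ℤ))
           - (2 * c) ^ (2 - 2 * (g : ℤ))))
    (n : ℕ) (hn : 1 ≤ n) (a b c : ℝ) (ha : 0 < a) (hb : 0 < b) (hc : 0 < c)
    (h1 : 0 < a + b + c) (h2 : 0 < a + b - c) (h3 : 0 < a - b + c)
    (h4 : 0 < a - b - c) :
    (∑ k ∈ Finset.Icc 1 n, 2 / (Nat.factorial (2 * k) : ℝ)
          * iteratedDeriv (2 * k) (fun y => F (n - k) y b c) a
        = if n = 1 then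
            Real.log ((a + b + c) * (a + b - c) * (a - b + c) * (a - b - c))
              - 4 * Real.log (2 * a)
          else 1 / ((n : ℝ) - 1) * (2 * a) ^ (2 - 2 * (n : ℤ)))
    ∧ (∑ k ∈ Finset.Icc 1 n, 2 / (Nat.factorial (2 * k) : ℝ)
          * iteratedDeriv (2 * k) (fun y => F (n - k) a y c) b
        = if n = 1 then
            Real.log ((a + b + c) * (a + b - c) * (a - b + c) * (a - b - c))
              - 4 * Real.log (2 * b)
          else 1 / ((n : ℝ) - 1) * (2 * b) ^ (2 - 2 * (n : ℤ)))
    ∧ (∑ k ∈ Finset.Icc 1 n, 2 / (Nat.factorial (2 * k) : ℝ)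
          * iteratedDeriv (2 * k) (fun y => F (n - k) a b y) c
        = if n = 1 then
            Real.log ((a + b + c) * (a + b - c) * (a - b + c) * (a - b - c))
              - 4 * Real.log (2 * c)
          else 1 / ((n : ℝ) - 1) * (2 * c) ^ (2 - 2 * (n : ℤ))) := by
  have hF : ∀ g, ∃ K : ℝ, ∀ a b c : ℝ, 0 < b → 0 < c → b + c < a →
      F g a b c = gaussFreeEnergy g a b c + K := by
    intro g
    refine ⟨if g = 1 then -(Real.log 2 / 4) else 0, fun a b c hb hc habc => ?_⟩
    obtain ⟨ha, h₁, h₂, h₃, h₄⟩ : 0 < a ∧ 0 < a + b + c ∧ 0 < a + b - c ∧ 0 < a - b + c ∧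
        0 < a - b - c := by refine ⟨?_, ?_, ?_, ?_, ?_⟩ <;> linarith
    rcases g with _ | _ | g
    · rw [hF0 a b c ha hb hc h₁ h₂ h₃ h₄, gaussFreeEnergy_zero, if_neg (by omega), add_zero]
    · rw [hF1 a b c ha hb hc h₁ h₂ h₃ h₄,
        gaussFreeEnergy_one ha.ne' hb.ne' hc.ne' h₁.ne' h₂.ne' h₃.ne' h₄.ne', if_pos rfl]
      ring
    · rw [hFg _ (by omega) a b c ha hb hc h₁ h₂ h₃ h₄, gaussFreeEnergy_of_two_le (by omega),
        if_neg (by omega), add_zero]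
  refine ⟨?_, ?_, ?_⟩
  · change secondDifferenceCoeff (fun g y => F g y b c) n a = _
    rw [← secondDifferenceCoeff_gaussFreeEnergy₁ hn ha.ne' h1.ne' h2.ne' h3.ne' h4.ne']
    exact secondDifferenceCoeff_congr (fun g => (hF g).imp fun K hK => by
      filter_upwards [Ioi_mem_nhds (by linarith : b + c < a)] with y hy using
        hK y b c hb hc hy) n
  · change secondDifferenceCoeff (fun g y => F g a y c) n b = _
    rw [← secondDifferenceCoeff_gaussFreeEnergy₂ hn hb.ne' h1.ne' h2.ne' h3.ne' h4.ne']
    exact secondDifferenceCoeff_congr (fun g => (hF g).imp fun K hK => by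
      filter_upwards [Ioo_mem_nhds hb (by linarith : b < a - c)] with y hy using
        hK a y c hy.1 hc (by linarith [hy.2])) n
  · change secondDifferenceCoeff (fun g y => F g a b y) n c = _
    rw [← secondDifferenceCoeff_gaussFreeEnergy₃ hn hc.ne' h1.ne' h2.ne' h3.ne' h4.ne']
    exact secondDifferenceCoeff_congr (fun g => (hF g).imp fun K hK => by
      filter_upwards [Ioo_mem_nhds hc (by linarith : c < a - b)] with y hy using
        hK a b y hb hy.1 (by linarith [hy.2])) n
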